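/- Let q be a time-homogeneous conservative stable Q-function on a Borel space S with bounded rate q_x ≤ q̄ < ∞, and let w : S → [1,∞) satisfy ∫_S w(y) q(dy|x) ≤ ρ w(x) for all x, with ρ > 0. Let q^w be the w-transformed Q-function on S_δ = S ∪ {δ} (as defined via q^w(Γ|x) = ∫_Γ w(y)q(dy|x)/w(x) for x ∉ Γ, q^w({δ}|x) = ρ − ∫_S w(y)q(dy|x)/w(x), q^w(·|δ)=0), and let p_q and p_{q^w} be the respective Feller constructions. Then for all x ∈ S, 0 ≤ s ≤ t, and Γ ∈ B(S): p_{q^w}(s,x,t,Γ) = (e^{−ρ(t−s)}/w(x)) ∫_Γ w(y) p_q(s,x,t,dy). -/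

import Mathlib

/-!
The identity holds term by term in the Feller series, by induction on `n`. Since
`q^w_x = ρ + q_x`, the holding-time factor `e^{-(ρ + q_x)(u-s)}` of `q^w` splits into
`e^{-ρ(u-s)} e^{-q_x(u-s)}`, and `e^{-ρ(u-s)}` combines with the factor `e^{-ρ(t-u)}` from the
induction hypothesis into `e^{-ρ(t-s)}`; the density `w(z)/w(x)` of `q̃^w` cancels the `1/w(z)`
from the induction hypothesis. The measurability needed to unfold `Measure.bind` comes from
viewing `q̃` as a kernel, which is finite because the rate is bounded.
-/

open MeasureTheory
open scoped ENNReal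

/-- The Feller construction, as a measure, for a time-homogeneous conservative stable
Q-function: `qt x` is the off-diagonal jump measure `q̃(dy|x)` and `qx x = q_x`, with
`p^{(0)}(s,x,t,·) = e^{-q_x (t-s)} δ_x` and
`p^{(n+1)}(s,x,t,Γ) = ∫_s^t e^{-q_x (u-s)} ∫_S p^{(n)}(u,z,t,Γ) q̃(dz|x) du`. -/
noncomputable def fellerM {S : Type*} [MeasurableSpace S]
    (qt : S → Measure S) (qx : S → ℝ) : ℕ → ℝ → ℝ → S → Measure S
  | 0 => fun s t x => ENNReal.ofReal (Real.exp (-(qx x) * (t - s))) • Measure.dirac x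
  | (n+1) => fun s t x =>
      ((MeasureTheory.volume.restrict (Set.Ioc s t)).withDensity
          (fun u => ENNReal.ofReal (Real.exp (-(qx x) * (u - s))))).bind
        (fun u => (qt x).bind (fun z => fellerM qt qx n u t z))

open ProbabilityTheory Set

lemma Measurable.lintegral_kernel_apply_snd {α β γ : Type*} [MeasurableSpace α]
    [MeasurableSpace β] [MeasurableSpace γ] (κ : Kernel β γ) [IsSFiniteKernel κ]
    {F : α × γ → ℝ≥0∞} (hF : Measurable F) :
    Measurable fun p : α × β => ∫⁻ z, F (p.1, z) ∂κ p.2 :=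
  (hF.comp (measurable_fst.fst.prodMk measurable_snd)).lintegral_kernel_prod_right'
    (κ := Kernel.prodMkLeft α κ)

section FellerConstruction

variable {S : Type*} [MeasurableSpace S] {qx : S → ℝ}

lemma fellerM_zero_apply {qt : S → Measure S} (s t : ℝ) (x : S) {Γ : Set S}
    (hΓ : MeasurableSet Γ) :
    fellerM qt qx 0 s t x Γ = ENNReal.ofReal (Real.exp (-(qx x) * (t - s))) * Γ.indicator 1 x := by
  simp [fellerM, Measure.dirac_apply' _ hΓ]

lemma setLIntegral_fellerM_zero {qt : S → Measure S} {f : S → ℝ≥0∞} (hf : Measurable f)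
    (s t : ℝ) (x : S) {Γ : Set S} (hΓ : MeasurableSet Γ) :
    ∫⁻ y in Γ, f y ∂fellerM qt qx 0 s t x
      = ENNReal.ofReal (Real.exp (-(qx x) * (t - s))) * Γ.indicator f x := by
  rw [fellerM, Measure.restrict_smul, lintegral_smul_measure, ← lintegral_indicator hΓ,
    lintegral_dirac' _ (hf.indicator hΓ), smul_eq_mul]

variable (κ : Kernel S S) [IsSFiniteKernel κ]

lemma lintegral_fellerM_succ {n : ℕ} {t : ℝ}
    (hmeas : Measurable fun p : ℝ × S => fellerM κ qx n p.1 t p.2)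
    {f : S → ℝ≥0∞} (hf : Measurable f) (s : ℝ) (x : S) :
    ∫⁻ y, f y ∂fellerM κ qx (n + 1) s t x
      = ∫⁻ u in Ioc s t, ENNReal.ofReal (Real.exp (-(qx x) * (u - s)))
          * ∫⁻ z, ∫⁻ y, f y ∂fellerM κ qx n u t z ∂κ x := by
  have hz (u : ℝ) : Measurable fun z => fellerM κ qx n u t z := hmeas.comp measurable_prodMk_left
  have hjump : Measurable fun u => (κ x).bind fun z => fellerM κ qx n u t z := by
    refine Measure.measurable_of_measurable_coe _ fun A hA => ?_
    simp_rw [Measure.bind_apply hA (hz _).aemeasurable]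
    exact ((Measure.measurable_coe hA).comp hmeas).lintegral_prod_right'
  have hinner : Measurable fun u => ∫⁻ z, ∫⁻ y, f y ∂fellerM κ qx n u t z ∂κ x :=
    ((Measure.measurable_lintegral hf).comp hmeas).lintegral_prod_right'
  rw [fellerM, Measure.lintegral_bind hjump.aemeasurable hf.aemeasurable,
    lintegral_withDensity_eq_lintegral_mul _ (by fun_prop) (by
      simpa only [Measure.lintegral_bind (hz _).aemeasurable hf.aemeasurable] using hinner)]
  simp only [Measure.lintegral_bind (hz _).aemeasurable hf.aemeasurable, Pi.mul_apply]

lemma fellerM_succ_apply {n : ℕ} {t : ℝ}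
    (hmeas : Measurable fun p : ℝ × S => fellerM κ qx n p.1 t p.2)
    (s : ℝ) (x : S) {Γ : Set S} (hΓ : MeasurableSet Γ) :
    fellerM κ qx (n + 1) s t x Γ
      = ∫⁻ u in Ioc s t, ENNReal.ofReal (Real.exp (-(qx x) * (u - s)))
          * ∫⁻ z, fellerM κ qx n u t z Γ ∂κ x := by
  simpa only [lintegral_indicator_one hΓ] using
    lintegral_fellerM_succ κ hmeas (measurable_one.indicator hΓ) s x

theorem measurable_fellerM (hqx : Measurable qx) (n : ℕ) (t : ℝ) :
    Measurable fun p : ℝ × S => fellerM κ qx n p.1 t p.2 := by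
  induction n with
  | zero =>
    refine Measure.measurable_of_measurable_coe _ fun Γ hΓ => ?_
    simp only [fellerM_zero_apply _ _ _ hΓ]
    have : Measurable (Γ.indicator (1 : S → ℝ≥0∞)) := measurable_one.indicator hΓ
    fun_prop
  | succ n ih =>
    refine Measure.measurable_of_measurable_coe _ fun Γ hΓ => ?_
    simp only [fellerM_succ_apply κ ih _ _ hΓ, ← lintegral_indicator measurableSet_Ioc]
    have hjump : Measurable fun q : (ℝ × S) × ℝ => ∫⁻ z, fellerM κ qx n q.2 t z Γ ∂κ q.1.2 :=
      (((Measure.measurable_coe hΓ).comp ih).lintegral_kernel_apply_snd κ).comp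
        (measurable_snd.prodMk measurable_fst.snd)
    have hIoc : MeasurableSet {q : (ℝ × S) × ℝ | q.2 ∈ Ioc q.1.1 t} :=
      (measurableSet_lt measurable_fst.fst measurable_snd).inter
        (measurableSet_le measurable_snd measurable_const)
    have hexp : Measurable fun q : (ℝ × S) × ℝ =>
        ENNReal.ofReal (Real.exp (-qx q.1.2 * (q.2 - q.1.1))) := by fun_prop
    exact Measurable.lintegral_prod_right' ((hexp.mul hjump).indicator hIoc)

end FellerConstruction

namespace ProbabilityTheory.Kernel

variable {S : Type*} [MeasurableSpace S] (κ : Kernel S S) [IsSFiniteKernel κ] (w : S → ℝ)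

/-- The off-diagonal part `q̃^w(dy|x) = (w(y)/w(x)) q̃(dy|x)` of the `w`-transform; the mass
`q^w({δ}|x)` sent to the cemetery `δ` plays no role in the Feller construction on `S`. -/
noncomputable def wTransform : Kernel S S :=
  κ.withDensity fun x y => ENNReal.ofReal (w y / w x)

instance : IsSFiniteKernel (κ.wTransform w) :=
  IsSFiniteKernel.withDensity κ fun _ _ => ENNReal.ofReal_ne_top

variable {w}

lemma wTransform_apply (hw : Measurable w) (x : S) :
    κ.wTransform w x = (κ x).withDensity fun y => ENNReal.ofReal (w y / w x) :=
  Kernel.withDensity_apply κ (by fun_prop) x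

theorem fellerM_wTransform_apply {qx : S → ℝ} (hqx : Measurable qx) (hw : Measurable w)
    (hw_pos : ∀ x, 0 < w x) (ρ : ℝ) (n : ℕ) (s t : ℝ) (x : S) {Γ : Set S}
    (hΓ : MeasurableSet Γ) :
    fellerM (κ.wTransform w) (fun x => ρ + qx x) n s t x Γ
      = ENNReal.ofReal (Real.exp (-ρ * (t - s)) / w x)
          * ∫⁻ y in Γ, ENNReal.ofReal (w y) ∂fellerM κ qx n s t x := by
  have hwm : Measurable fun y => ENNReal.ofReal (w y) := ENNReal.measurable_ofReal.comp hw
  induction n generalizing s x with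
  | zero =>
    rw [fellerM_zero_apply _ _ _ hΓ, setLIntegral_fellerM_zero hwm _ _ _ hΓ]
    by_cases hx : x ∈ Γ
    · rw [indicator_of_mem hx, indicator_of_mem hx, Pi.one_apply, mul_one,
        ← ENNReal.ofReal_mul (Real.exp_nonneg _),
        ← ENNReal.ofReal_mul (div_nonneg (Real.exp_nonneg _) (hw_pos x).le),
        mul_left_comm, div_mul_cancel₀ _ (hw_pos x).ne', ← Real.exp_add]
      ring_nf
    · simp [hx]
  | succ n ih =>
    have hmw := measurable_fellerM (κ.wTransform w) (qx := fun x => ρ + qx x) (by fun_prop) n t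
    rw [fellerM_succ_apply _ hmw s x hΓ, ← lintegral_indicator hΓ,
      lintegral_fellerM_succ κ (measurable_fellerM κ hqx n t) (hwm.indicator hΓ) s x,
      ← lintegral_const_mul' _ _ ENNReal.ofReal_ne_top]
    refine setLIntegral_congr_fun measurableSet_Ioc fun u _ => ?_
    have hmwΓ : Measurable fun z => fellerM (κ.wTransform w) (fun x => ρ + qx x) n u t z Γ :=
      (Measure.measurable_coe hΓ).comp (hmw.comp measurable_prodMk_left)
    rw [wTransform_apply κ hw, lintegral_withDensity_eq_lintegral_mul _ (by fun_prop) hmwΓ]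
    have hweight (z : S) (I : ℝ≥0∞) :
        ENNReal.ofReal (w z / w x) * (ENNReal.ofReal (Real.exp (-ρ * (t - u)) / w z) * I)
          = ENNReal.ofReal (Real.exp (-ρ * (t - u)) / w x) * I := by
      rw [← mul_assoc, ← ENNReal.ofReal_mul (div_nonneg (hw_pos z).le (hw_pos x).le),
        div_mul_div_comm, mul_comm (w z), mul_div_mul_right _ _ (hw_pos z).ne']
    simp only [Pi.mul_apply, ih, hweight, lintegral_const_mul' _ _ ENNReal.ofReal_ne_top,
      lintegral_indicator hΓ, ← mul_assoc]
    rw [← ENNReal.ofReal_mul (Real.exp_nonneg _),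
      ← ENNReal.ofReal_mul (div_nonneg (Real.exp_nonneg _) (hw_pos x).le),
      mul_div_assoc', div_mul_eq_mul_div, ← Real.exp_add, ← Real.exp_add]
    ring_nf

end ProbabilityTheory.Kernel

theorem stmt10_general {S : Type*} [MeasurableSpace S]
    (qt : S → Measure S) (qx : S → ℝ) (w : S → ℝ) (ρ qbar : ℝ)
    (hqbar : ∀ x, qx x ≤ qbar)
    (hcons : ∀ x, qt x Set.univ = ENNReal.ofReal (qx x))
    (hw : Measurable w) (hw1 : ∀ x, 1 ≤ w x) (hqxm : Measurable qx)
    (hqtm : ∀ Γ : Set S, MeasurableSet Γ → Measurable fun x => qt x Γ) :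
    ∀ (x : S) (s t : ℝ), s ≤ t → ∀ Γ : Set S, MeasurableSet Γ →
      (Measure.sum fun n : ℕ =>
          fellerM (fun x => (qt x).withDensity fun y => ENNReal.ofReal (w y / w x))
            (fun x => ρ + qx x) n s t x) Γ
        = ENNReal.ofReal (Real.exp (-ρ * (t - s)) / w x)
            * ∫⁻ y in Γ, ENNReal.ofReal (w y)
                ∂ (Measure.sum fun n : ℕ => fellerM qt qx n s t x) := by
  intro x s t _ Γ hΓ
  obtain ⟨κ, rfl⟩ : ∃ κ : Kernel S S, ⇑κ = qt :=
    ⟨⟨qt, Measure.measurable_of_measurable_coe _ hqtm⟩, rfl⟩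
  have : IsFiniteKernel κ := ⟨⟨ENNReal.ofReal qbar, ENNReal.ofReal_lt_top,
    fun x => (hcons x).trans_le (ENNReal.ofReal_le_ofReal (hqbar x))⟩⟩
  have hκw : (fun x => (κ x).withDensity fun y => ENNReal.ofReal (w y / w x))
      = ⇑(κ.wTransform w) :=
    funext fun x => (κ.wTransform_apply hw x).symm
  rw [hκw, Measure.sum_apply _ hΓ, Measure.restrict_sum _ hΓ, lintegral_sum_measure,
    ← ENNReal.tsum_mul_left]
  exact tsum_congr fun n =>
    κ.fellerM_wTransform_apply hqxm hw (fun x => one_pos.trans_le (hw1 x)) ρ n s t x hΓ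

/-- for a time-homogeneous conservative stable Q-function with bounded rate
and a drift function `w ≥ 1` with `∫_S w dq ≤ ρ w` (equivalently `∫ w dq̃ ≤ (ρ+q_x) w(x)`),
the Feller transition functions of `q` and of the w-transformed Q-function `q^w`
(off-diagonal part `q̃^w(dy|x) = (w(y)/w(x)) q̃(dy|x)`, rate `q^w_x = ρ + q_x`) satisfy
`p_{q^w}(s,x,t,Γ) = (e^{-ρ(t-s)}/w(x)) ∫_Γ w(y) p_q(s,x,t,dy)` for all `Γ ∈ B(S)`. -/
theorem stmt10 {S : Type*} [MeasurableSpace S]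
    (qt : S → Measure S) (qx : S → ℝ) (w : S → ℝ) (ρ qbar : ℝ)
    (hρ : 0 < ρ) (hqbar : ∀ x, qx x ≤ qbar) (hq0 : ∀ x, 0 ≤ qx x)
    (hdiag : ∀ x, qt x {x} = 0)
    (hcons : ∀ x, qt x Set.univ = ENNReal.ofReal (qx x))
    (hw : Measurable w) (hw1 : ∀ x, 1 ≤ w x) (hqxm : Measurable qx)
    (hqtm : ∀ Γ : Set S, MeasurableSet Γ → Measurable fun x => qt x Γ)
    (hdrift : ∀ x, (∫⁻ y, ENNReal.ofReal (w y) ∂ qt x)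
      ≤ ENNReal.ofReal ((ρ + qx x) * w x)) :
    ∀ (x : S) (s t : ℝ), s ≤ t → ∀ Γ : Set S, MeasurableSet Γ →
      (Measure.sum fun n : ℕ =>
          fellerM (fun x => (qt x).withDensity fun y => ENNReal.ofReal (w y / w x))
            (fun x => ρ + qx x) n s t x) Γ
        = ENNReal.ofReal (Real.exp (-ρ * (t - s)) / w x)
            * ∫⁻ y in Γ, ENNReal.ofReal (w y)
                ∂ (Measure.sum fun n : ℕ => fellerM qt qx n s t x) :=
  stmt10_general qt qx w ρ qbar hqbar hcons hw hw1 hqxm hqtm
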